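/- arXiv:2005.08634 — 2 statements merged into one kernel-verified Lean document; each statement's English description precedes it below -/
import Mathlib

section
/- If Φ_1 and Φ_2 are switching equivalent T-gain graphs on a graph G with vertices v_1,…,v_n, then E_{Φ_1}(v_i) = E_{Φ_2}(v_i) for each i. -/
open Matrix BigOperators
open scoped Classical ComplexOrder

/-- A complex unit gain graph (`𝕋`-gain graph) on a finite vertex type `V`. -/
structure TGainGraph (V : Type*) [Fintype V] [DecidableEq V] where
  G : SimpleGraph V
  A : Matrix V V ℂ
  herm : A.IsHermitian
  unitGain : ∀ i j, G.Adj i j → ‖A i j‖ = 1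
  zeroGain : ∀ i j, ¬ G.Adj i j → A i j = 0

namespace TGainGraph

variable {V : Type*} [Fintype V] [DecidableEq V]

/-- The energy of a `𝕋`-gain graph: sum of absolute values of eigenvalues of `A(Φ)`. -/
noncomputable def energy (Φ : TGainGraph V) : ℝ :=
  ∑ i, |Φ.herm.eigenvalues i|

/-- `|A(Φ)| = (A(Φ) A(Φ)ᴴ)^{1/2}`. -/
noncomputable def absMatrix (Φ : TGainGraph V) : Matrix V V ℂ :=
  ((Matrix.posSemidef_self_mul_conjTranspose Φ.A).1.eigenvectorUnitary : Matrix V V ℂ) *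
    diagonal ((↑) ∘ (√·) ∘ (Matrix.posSemidef_self_mul_conjTranspose Φ.A).1.eigenvalues) *
    (star (Matrix.posSemidef_self_mul_conjTranspose Φ.A).1.eigenvectorUnitary : Matrix V V ℂ)

/-- Energy of a vertex: the `(i,i)` entry of `|A(Φ)|`. -/
noncomputable def vertexEnergy (Φ : TGainGraph V) (i : V) : ℝ :=
  (Φ.absMatrix i i).re

/-- Degree of a vertex in the underlying graph. -/
noncomputable def deg (Φ : TGainGraph V) (i : V) : ℕ := Φ.G.degree i

/-- Maximum vertex degree of the underlying graph. -/
noncomputable def maxDeg (Φ : TGainGraph V) : ℕ := Φ.G.maxDegree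

/-- Spectral radius of `A(Φ)`. -/
noncomputable def specRadius (Φ : TGainGraph V) : ℝ :=
  ⨆ i, |Φ.herm.eigenvalues i|

/-- Switching equivalence of two gain graphs on the same vertex set: same
underlying graph, and adjacency matrices conjugate by a diagonal unitary. -/
def SwitchEquiv (Φ₁ Φ₂ : TGainGraph V) : Prop :=
  Φ₁.G = Φ₂.G ∧ ∃ U : Matrix V V ℂ, U.IsDiag ∧ U ∈ Matrix.unitaryGroup V ℂ ∧
    Φ₁.A = U * Φ₂.A * Uᴴ

/-- `Φ` switches to the all-ones gain on its underlying graph,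
i.e. `Φ ∼ (G, 1)` (equivalently, `Φ` is balanced). -/
def SwitchesToOne (Φ : TGainGraph V) : Prop :=
  ∃ U : Matrix V V ℂ, U.IsDiag ∧ U ∈ Matrix.unitaryGroup V ℂ ∧
    Φ.A = U * (Φ.G.adjMatrix ℂ) * Uᴴ

/-- `Φ ∼ (K_{a,b}, 1)`: the underlying graph is (isomorphic to) the complete
bipartite graph `K_{a,b}` via some bijection `e`, and the gains switch to `1`. -/
def SwitchEquivToCompleteBipartite (Φ : TGainGraph V) (a b : ℕ) : Prop :=
  (∃ e : V ≃ (Fin a ⊕ Fin b), ∀ i j, Φ.G.Adj i j ↔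
      (completeBipartiteGraph (Fin a) (Fin b)).Adj (e i) (e j)) ∧
  SwitchesToOne Φ

/-- The gain of a walk: the product of the gains of its edges in order. -/
noncomputable def walkGain (Φ : TGainGraph V) {u v : V} (w : Φ.G.Walk u v) : ℂ :=
  (w.darts.map (fun d => Φ.A d.fst d.snd)).prod

/-- A gain graph is balanced if every cycle has gain `1`. -/
def Balanced (Φ : TGainGraph V) : Prop :=
  ∀ (u : V) (w : Φ.G.Walk u u), w.IsCycle → Φ.walkGain w = 1

/-- The restriction of a gain graph to a set of vertices. -/
noncomputable def restrict (Φ : TGainGraph V) (s : Set V) : TGainGraph s where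
  G := Φ.G.induce s
  A := Φ.A.submatrix (Subtype.val) (Subtype.val)
  herm := Φ.herm.submatrix _
  unitGain := fun i j h => Φ.unitGain i j h
  zeroGain := fun i j h => Φ.zeroGain i j h

/-- The vertex set of the connected component `c`. -/
def componentSet (Φ : TGainGraph V) (c : Φ.G.ConnectedComponent) : Set V :=
  {v | Φ.G.connectedComponentMk v = c}

/-- Every connected component of `Φ` is either an isolated vertex or a balanced
complete bipartite gain graph `(K_{k,k},1)` with a perfect matching. -/
def ComponentsBalancedCompleteBipartitePM (Φ : TGainGraph V) : Prop :=
  ∀ c : Φ.G.ConnectedComponent,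
    (∀ v ∈ Φ.componentSet c, ∀ w, ¬ Φ.G.Adj v w) ∨
    ∃ k : ℕ, 0 < k ∧
      (Φ.restrict (Φ.componentSet c)).SwitchEquivToCompleteBipartite k k

/-- The matching number of a graph. -/
noncomputable def matchingNumber (G : SimpleGraph V) : ℕ :=
  sSup {k | ∃ M : G.Subgraph, M.IsMatching ∧ M.edgeSet.ncard = k}

/-- The vertex cover number of a graph. -/
noncomputable def coverNumber (G : SimpleGraph V) : ℕ :=
  sInf {k | ∃ s : Finset V, s.card = k ∧ ∀ i j, G.Adj i j → i ∈ s ∨ j ∈ s}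

/-- The number of odd cycles of a graph (counted by their edge sets). -/
noncomputable def oddCycleCount (G : SimpleGraph V) : ℕ :=
  Set.ncard {s : Set (Sym2 V) | ∃ (u : V) (w : G.Walk u u),
    w.IsCycle ∧ Odd w.length ∧ s = {e | e ∈ w.edges}}

end TGainGraph

/-! Switching by a diagonal unitary `U` conjugates `A Aᴴ`, hence also its square root `|A|`,
since star algebra automorphisms commute with the continuous functional calculus; and
conjugation by a diagonal unitary leaves every diagonal entry unchanged. -/

namespace Matrix

open Unitary

variable {n 𝕜 : Type*} [Fintype n] [DecidableEq n] [RCLike 𝕜]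

theorem cfc_conjStarAlgAut (u : unitaryGroup n 𝕜) (f : ℝ → ℝ) {M : Matrix n n 𝕜}
    (hM : M.IsHermitian) :
    cfc f (conjStarAlgAut 𝕜 _ u M) = conjStarAlgAut 𝕜 _ u (cfc f M) :=
  (StarAlgHomClass.map_cfc (conjStarAlgAut 𝕜 _ u) f M (finite_real_spectrum.continuousOn f)
    ((continuous_const.mul continuous_id).mul continuous_const) hM).symm

theorem IsDiag.mul_mul_conjTranspose_apply_self {α : Type*} [CommSemiring α] [StarRing α]
    {U : Matrix n n α} (hU : U.IsDiag) (M : Matrix n n α) (i : n) :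
    (U * M * Uᴴ) i i = U i i * star (U i i) * M i i := by
  rw [← hU.diagonal_diag, diagonal_conjTranspose, mul_diagonal, diagonal_mul]
  simp only [diag_apply, Pi.star_apply, diagonal_apply_eq]
  ring

theorem IsDiag.conjStarAlgAut_apply_self (u : unitaryGroup n 𝕜) (hu : (u : Matrix n n 𝕜).IsDiag)
    (M : Matrix n n 𝕜) (i : n) : conjStarAlgAut 𝕜 _ u M i i = M i i := by
  have hunit : (u : Matrix n n 𝕜) i i * star ((u : Matrix n n 𝕜) i i) = 1 := by
    simpa [← star_eq_conjTranspose] using (hu.mul_mul_conjTranspose_apply_self 1 i).symm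
  rw [conjStarAlgAut_apply, star_eq_conjTranspose, hu.mul_mul_conjTranspose_apply_self, hunit,
    one_mul]

end Matrix

namespace TGainGraph

variable {V : Type*} [Fintype V] [DecidableEq V]

theorem absMatrix_eq_cfc_sqrt (Φ : TGainGraph V) :
    Φ.absMatrix = cfc Real.sqrt (Φ.A * Φ.Aᴴ) := by
  rw [(posSemidef_self_mul_conjTranspose Φ.A).1.cfc_eq]
  rfl

end TGainGraph

open TGainGraph in
/-- Switching-equivalent gain graphs have the same vertex energies. -/
theorem vertexEnergy_eq_of_switchEquiv {V : Type*} [Fintype V] [DecidableEq V]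
    (Φ₁ Φ₂ : TGainGraph V) (h : Φ₁.SwitchEquiv Φ₂) :
    ∀ i, Φ₁.vertexEnergy i = Φ₂.vertexEnergy i := by
  obtain ⟨-, U, hdiag, hU, hA⟩ := h
  let u : unitaryGroup V ℂ := ⟨U, hU⟩
  have hA_conj : Φ₁.A = Unitary.conjStarAlgAut ℂ _ u Φ₂.A := hA
  have habs : Φ₁.absMatrix = Unitary.conjStarAlgAut ℂ _ u Φ₂.absMatrix := by
    rw [absMatrix_eq_cfc_sqrt, absMatrix_eq_cfc_sqrt, ← star_eq_conjTranspose,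
      ← star_eq_conjTranspose, hA_conj, ← map_star, ← map_mul]
    exact cfc_conjStarAlgAut u _ (posSemidef_self_mul_conjTranspose Φ₂.A).1
  intro i
  rw [vertexEnergy, vertexEnergy, habs, hdiag.conjStarAlgAut_apply_self u]
end

section
/- If Φ = (K_{n,n}, φ) is any T-gain graph on the complete bipartite graph K_{n,n}, then E(Φ) ≥ E(K_{n,n}) = 2n, and equality holds if and only if Φ is switching equivalent to (K_{n,n}, 1). -/
open Matrix BigOperators
open scoped Classical ComplexOrder

/-!
On `K_{n,n}` the matrix `A(Φ)` is `[[0, B], [Bᴴ, 0]]` with every entry of `B` of modulus one.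
Its eigenvalues satisfy `∑ λᵢ² = tr A² = 2n²` and, by Gershgorin, `|λᵢ| ≤ n`, hence
`2n² ≤ n · E(Φ)`. Equality holds iff every `|λᵢ|` is `0` or `n`, i.e. iff `∑ λᵢ⁴ = n² ∑ λᵢ² = 2n⁴`.
Now `∑ λᵢ⁴ = tr A⁴ = 2 ∑ |(BBᴴ)ₐᵦ|²` and each entry of `BBᴴ` is a sum of `n` unimodular numbers,
so equality means each such sum has modulus `n`: the rows of `B` are unimodular multiples of
each other, `B = x yᴴ` with `x, y` unimodular, and `diag(x, y)` switches `Φ` to `(K_{n,n}, 1)`.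
-/

namespace Matrix

variable {𝕜 m p : Type*} [RCLike 𝕜] [Fintype m] [Fintype p]

theorem trace_mul_conjTranspose_self_eq_sum (A : Matrix m p 𝕜) :
    (A * Aᴴ).trace = ∑ i, ∑ j, (‖A i j‖ ^ 2 : 𝕜) := by
  simp [trace, mul_apply, RCLike.mul_conj]

theorem sum_sq_norm_conjTranspose_mul_self (B : Matrix m p 𝕜) :
    ∑ i, ∑ j, ‖(Bᴴ * B) i j‖ ^ 2 = ∑ i, ∑ j, ‖(B * Bᴴ) i j‖ ^ 2 := by
  have h : (Bᴴ * B * (Bᴴ * B)ᴴ).trace = (B * Bᴴ * (B * Bᴴ)ᴴ).trace := by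
    simp only [conjTranspose_mul, conjTranspose_conjTranspose, Matrix.mul_assoc]
    rw [trace_mul_comm, Matrix.mul_assoc, Matrix.mul_assoc]
  rw [trace_mul_conjTranspose_self_eq_sum, trace_mul_conjTranspose_self_eq_sum] at h
  exact_mod_cast h

variable [DecidableEq m] {A : Matrix m m 𝕜}

theorem IsHermitian.trace_pow_eq_sum_eigenvalues_pow (hA : A.IsHermitian) (k : ℕ) :
    (A ^ k).trace = ∑ i, (hA.eigenvalues i : 𝕜) ^ k := by
  conv_lhs => rw [hA.spectral_theorem]
  rw [← map_pow, Unitary.conjStarAlgAut_apply, trace_mul_cycle,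
    Unitary.coe_star_mul_self, Matrix.one_mul, diagonal_pow, trace_diagonal]
  rfl

theorem IsHermitian.sum_eigenvalues_pow_two_mul (hA : A.IsHermitian) (k : ℕ) :
    ∑ i, hA.eigenvalues i ^ (2 * k) = ∑ i, ∑ j, ‖(A ^ k) i j‖ ^ 2 := by
  have h := hA.trace_pow_eq_sum_eigenvalues_pow (2 * k)
  rw [two_mul, pow_add] at h
  nth_rw 2 [← (hA.pow k).eq] at h
  rw [trace_mul_conjTranspose_self_eq_sum, ← two_mul] at h
  exact_mod_cast h.symm

theorem IsHermitian.abs_eigenvalues_le (hA : A.IsHermitian) {r : ℝ}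
    (hr : ∀ i, ∑ j, ‖A i j‖ ≤ r) (i : m) : |hA.eigenvalues i| ≤ r := by
  have hμ : Module.End.HasEigenvalue (toLin' A) (hA.eigenvalues i : 𝕜) := by
    refine Module.End.hasEigenvalue_of_hasEigenvector (x := ⇑(hA.eigenvectorBasis i)) ⟨?_, ?_⟩
    · rw [Module.End.mem_eigenspace_iff, toLin'_apply, hA.mulVec_eigenvectorBasis]
      ext j; simp [RCLike.real_smul_eq_coe_mul]
    · exact fun h => hA.eigenvectorBasis.orthonormal.ne_zero i (by ext j; exact congrFun h j)
  obtain ⟨k, hk⟩ := eigenvalue_mem_ball hμ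
  rw [Metric.mem_closedBall, dist_eq_norm] at hk
  calc |hA.eigenvalues i| = ‖(hA.eigenvalues i : 𝕜)‖ := (RCLike.norm_ofReal _).symm
    _ ≤ ‖A k k‖ + ‖(hA.eigenvalues i : 𝕜) - A k k‖ := norm_le_norm_add_norm_sub' _ _
    _ ≤ ∑ j, ‖A k j‖ := by
        rw [← Finset.add_sum_erase _ _ (Finset.mem_univ k)]; gcongr
    _ ≤ r := hr k

end Matrix

section RealMoments

variable {ι : Type*} [Fintype ι] {e : ι → ℝ} {r : ℝ}

theorem sum_sq_le_mul_sum_abs (he : ∀ i, |e i| ≤ r) : ∑ i, e i ^ 2 ≤ r * ∑ i, |e i| := by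
  rw [Finset.mul_sum]
  gcongr with i
  rw [← sq_abs, sq]
  exact mul_le_mul_of_nonneg_right (he i) (abs_nonneg _)

theorem mul_sum_abs_eq_sum_sq_iff (hr : 0 ≤ r) (he : ∀ i, |e i| ≤ r) :
    r * ∑ i, |e i| = ∑ i, e i ^ 2 ↔ r ^ 2 * ∑ i, e i ^ 2 = ∑ i, e i ^ 4 := by
  have h2 : ∀ i ∈ Finset.univ, e i ^ 2 ≤ r * |e i| := fun i _ => by
    rw [← sq_abs, sq]; exact mul_le_mul_of_nonneg_right (he i) (abs_nonneg _)
  have h4 : ∀ i ∈ Finset.univ, e i ^ 4 ≤ r ^ 2 * e i ^ 2 := fun i _ => by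
    have := sq_le_sq' (abs_le.mp (he i)).1 (abs_le.mp (he i)).2
    nlinarith [sq_nonneg (e i)]
  rw [Finset.mul_sum, Finset.mul_sum, eq_comm, Finset.sum_eq_sum_iff_of_le h2, eq_comm,
    Finset.sum_eq_sum_iff_of_le h4]
  refine forall₂_congr fun i _ =>
    ⟨fun h => by linear_combination (e i ^ 2 + r * |e i|) * h + r ^ 2 * sq_abs (e i), fun h => ?_⟩
  rcases eq_or_ne (e i) 0 with h0 | h0
  · simp [h0]
  · have hsq : e i ^ 2 = r ^ 2 :=
      mul_left_cancel₀ (pow_ne_zero 2 h0) (by linear_combination h)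
    have habs : |e i| = r := by rw [← sq_eq_sq₀ (abs_nonneg _) hr, sq_abs, hsq]
    rw [← sq_abs, habs, sq]

end RealMoments

theorem Complex.eq_sum_div_card_of_norm_sum_eq_card {ι : Type*} [Fintype ι] {f : ι → ℂ}
    (hf : ∀ i, ‖f i‖ = 1) (hs : ‖∑ i, f i‖ = Fintype.card ι) (i : ι) :
    f i = (∑ j, f j) / Fintype.card ι := by
  set s := ∑ j, f j
  -- `re (s̄ fⱼ) ≤ ‖s‖` for every `j` and these sum to `‖s‖²`, so each `s̄ fⱼ` is the real `‖s‖`.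
  have hle : ∀ j ∈ Finset.univ, (starRingEnd ℂ s * f j).re ≤ ‖s‖ := fun j _ => by
    simpa [hf j] using Complex.re_le_norm (starRingEnd ℂ s * f j)
  have hsum : ∑ j, (starRingEnd ℂ s * f j).re = ∑ _j : ι, ‖s‖ := by
    rw [← Complex.re_sum, ← Finset.mul_sum, Complex.conj_mul', Finset.sum_const, Finset.card_univ,
      nsmul_eq_mul, hs]
    norm_cast
    simp [sq]
  have hi : (starRingEnd ℂ s * f i).re = ‖starRingEnd ℂ s * f i‖ := by
    rw [(Finset.sum_eq_sum_iff_of_le hle).mp hsum i (Finset.mem_univ i)]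
    simp [hf i]
  have hN : (Fintype.card ι : ℂ) ≠ 0 := Nat.cast_ne_zero.mpr (Fintype.card_pos_iff.mpr ⟨i⟩).ne'
  have hc : starRingEnd ℂ s ≠ 0 := by
    rw [map_ne_zero, ← norm_ne_zero_iff, hs]; exact_mod_cast hN
  have key : starRingEnd ℂ s * f i = Fintype.card ι := by
    obtain ⟨-, him⟩ := Complex.nonneg_iff.mp (Complex.re_eq_norm.mp hi)
    apply Complex.ext <;> simp [hi, hf i, hs, ← him]
  have hss : starRingEnd ℂ s * s = (Fintype.card ι : ℂ) ^ 2 := by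
    rw [Complex.conj_mul', hs]; norm_cast
  rw [eq_div_iff hN]
  apply mul_left_cancel₀ hc
  linear_combination (Fintype.card ι : ℂ) * key - hss

namespace Matrix

theorem diagonal_mem_unitaryGroup_iff {ι : Type*} [Fintype ι] [DecidableEq ι]
    {d : ι → ℂ} : diagonal d ∈ unitaryGroup ι ℂ ↔ ∀ i, ‖d i‖ = 1 := by
  rw [mem_unitaryGroup_iff, star_eq_conjTranspose, diagonal_conjTranspose,
    diagonal_mul_diagonal, ← diagonal_one, diagonal_eq_diagonal_iff]
  refine forall_congr' fun i => ?_
  rw [Pi.star_apply, Complex.star_def, Complex.mul_conj']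
  norm_cast
  exact pow_eq_one_iff_of_nonneg (norm_nonneg _) two_ne_zero

theorem diagonal_mul_mul_conjTranspose_apply {ι R : Type*} [Fintype ι] [DecidableEq ι]
    [Semiring R] [StarRing R] (d : ι → R) (M : Matrix ι ι R) (i j : ι) :
    (diagonal d * M * (diagonal d)ᴴ) i j = d i * M i j * star (d j) := by
  rw [diagonal_conjTranspose, mul_diagonal, diagonal_mul, Pi.star_apply]

variable {m p : Type*} [Fintype p] {B : Matrix m p ℂ}

theorem mul_conjTranspose_apply (B : Matrix m p ℂ) (a b : m) :
    (B * Bᴴ) a b = ∑ c, B a c * starRingEnd ℂ (B b c) := by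
  simp [mul_apply]

theorem norm_mul_conjTranspose_apply_le (hB : ∀ a c, ‖B a c‖ = 1) (a b : m) :
    ‖(B * Bᴴ) a b‖ ≤ Fintype.card p := by
  rw [mul_conjTranspose_apply]
  refine (norm_sum_le _ _).trans_eq ?_
  simp [hB]

theorem exists_eq_vecMulVec_of_norm_mul_conjTranspose_apply_eq (hB : ∀ a c, ‖B a c‖ = 1)
    (a₀ : m) (h : ∀ a, ‖(B * Bᴴ) a a₀‖ = Fintype.card p) [Nonempty p] :
    ∃ x y : _ → ℂ, (∀ a, ‖x a‖ = 1) ∧ (∀ c, ‖y c‖ = 1) ∧ B = vecMulVec x (star y) := by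
  have hN : (Fintype.card p : ℂ) ≠ 0 := Nat.cast_ne_zero.mpr Fintype.card_ne_zero
  refine ⟨fun a => (B * Bᴴ) a a₀ / Fintype.card p, fun c => starRingEnd ℂ (B a₀ c),
    fun a => ?_, fun c => by simp [hB], ?_⟩
  · rw [norm_div, h, Complex.norm_natCast, div_self (by exact_mod_cast hN)]
  ext a c
  have hrow := Complex.eq_sum_div_card_of_norm_sum_eq_card
    (f := fun c => B a c * starRingEnd ℂ (B a₀ c)) (by simp [hB])
    (by rw [← mul_conjTranspose_apply, h]) c
  rw [← mul_conjTranspose_apply] at hrow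
  have hunit : starRingEnd ℂ (B a₀ c) * B a₀ c = 1 := by
    rw [Complex.conj_mul', hB]; norm_num
  calc B a c = B a c * starRingEnd ℂ (B a₀ c) * B a₀ c := by rw [mul_assoc, hunit, mul_one]
    _ = _ := by rw [hrow]; simp [vecMulVec_apply]

theorem norm_mul_conjTranspose_apply_of_eq_vecMulVec {x : m → ℂ} {y : p → ℂ}
    (hx : ∀ a, ‖x a‖ = 1) (hy : ∀ c, ‖y c‖ = 1) (a b : m) :
    ‖(vecMulVec x (star y) * (vecMulVec x (star y))ᴴ) a b‖ = Fintype.card p := by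
  have hunit : ∀ z : ℂ, ‖z‖ = 1 → starRingEnd ℂ z * z = 1 := fun z hz => by
    rw [Complex.conj_mul', hz]; norm_num
  rw [mul_conjTranspose_apply]
  simp_rw [vecMulVec_apply, Pi.star_apply, Complex.star_def, map_mul, Complex.conj_conj]
  have : ∀ c, x a * starRingEnd ℂ (y c) * (starRingEnd ℂ (x b) * y c)
      = x a * starRingEnd ℂ (x b) := fun c => by
    linear_combination x a * starRingEnd ℂ (x b) * hunit (y c) (hy c)
  simp [this, hx]

theorem sum_sq_norm_mul_conjTranspose_eq_iff [Fintype m] [Nonempty m] [Nonempty p]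
    (hB : ∀ a c, ‖B a c‖ = 1) :
    ∑ a, ∑ b, ‖(B * Bᴴ) a b‖ ^ 2 = (Fintype.card m * Fintype.card p : ℝ) ^ 2 ↔
      ∃ x y : _ → ℂ, (∀ a, ‖x a‖ = 1) ∧ (∀ c, ‖y c‖ = 1) ∧ B = vecMulVec x (star y) := by
  have hconst : (Fintype.card m * Fintype.card p : ℝ) ^ 2
      = ∑ _a : m, ∑ _b : m, (Fintype.card p : ℝ) ^ 2 := by
    simp; ring
  have hle : ∀ a b, ‖(B * Bᴴ) a b‖ ^ 2 ≤ (Fintype.card p : ℝ) ^ 2 := fun a b =>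
    pow_le_pow_left₀ (norm_nonneg _) (norm_mul_conjTranspose_apply_le hB a b) 2
  rw [hconst]
  constructor
  · intro h
    have hrows := (Finset.sum_eq_sum_iff_of_le fun a _ =>
      Finset.sum_le_sum fun b _ => hle a b).mp h
    have hentry : ∀ a b, ‖(B * Bᴴ) a b‖ = Fintype.card p := fun a b =>
      (pow_left_inj₀ (norm_nonneg _) (Nat.cast_nonneg _) two_ne_zero).mp
        ((Finset.sum_eq_sum_iff_of_le fun b _ => hle a b).mp
          (hrows a (Finset.mem_univ a)) b (Finset.mem_univ b))
    exact exists_eq_vecMulVec_of_norm_mul_conjTranspose_apply_eq hB (Classical.arbitrary m)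
      fun a => hentry a _
  · rintro ⟨x, y, hx, hy, rfl⟩
    simp only [norm_mul_conjTranspose_apply_of_eq_vecMulVec hx hy]

end Matrix

namespace TGainGraph

variable {α β : Type*} [Fintype α] [Fintype β] [DecidableEq α] [DecidableEq β]
  {Φ : TGainGraph (α ⊕ β)}

theorem A_eq_fromBlocks (hG : Φ.G = completeBipartiteGraph α β) :
    Φ.A = fromBlocks 0 Φ.A.toBlocks₁₂ Φ.A.toBlocks₁₂ᴴ 0 := by
  ext (a | c) (b | d)
  · simp [Φ.zeroGain, hG]
  · rfl
  · exact (Φ.herm.apply _ _).symm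
  · simp [Φ.zeroGain, hG]

theorem norm_toBlocks₁₂_apply (hG : Φ.G = completeBipartiteGraph α β) (a : α) (c : β) :
    ‖Φ.A.toBlocks₁₂ a c‖ = 1 :=
  Φ.unitGain _ _ (by simp [hG])

theorem sum_eigenvalues_sq (hG : Φ.G = completeBipartiteGraph α β) :
    ∑ i, Φ.herm.eigenvalues i ^ 2 = 2 * Fintype.card α * Fintype.card β := by
  have h := Φ.herm.sum_eigenvalues_pow_two_mul 1
  rw [h, pow_one, A_eq_fromBlocks hG]
  simp [Fintype.sum_sum_type, norm_toBlocks₁₂_apply hG]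
  ring

theorem sum_eigenvalues_pow_four (hG : Φ.G = completeBipartiteGraph α β) :
    ∑ i, Φ.herm.eigenvalues i ^ 4 =
      2 * ∑ a, ∑ b, ‖(Φ.A.toBlocks₁₂ * Φ.A.toBlocks₁₂ᴴ) a b‖ ^ 2 := by
  have h := Φ.herm.sum_eigenvalues_pow_two_mul 2
  rw [h, sq, A_eq_fromBlocks hG, fromBlocks_multiply]
  simp [Fintype.sum_sum_type, sum_sq_norm_conjTranspose_mul_self]
  ring

theorem abs_eigenvalues_le (hG : Φ.G = completeBipartiteGraph α β) (i : α ⊕ β) :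
    |Φ.herm.eigenvalues i| ≤ max (Fintype.card α) (Fintype.card β) := by
  refine Φ.herm.abs_eigenvalues_le (fun x => ?_) i
  rw [A_eq_fromBlocks hG]
  rcases x with a | c <;> simp [norm_toBlocks₁₂_apply hG]

theorem switchesToOne_iff (hG : Φ.G = completeBipartiteGraph α β) :
    Φ.SwitchesToOne ↔ ∃ x y, (∀ a, ‖x a‖ = 1) ∧ (∀ c, ‖y c‖ = 1) ∧
      Φ.A.toBlocks₁₂ = vecMulVec x (star y) := by
  constructor
  · rintro ⟨U, hdiag, hU, hA⟩
    rw [← hdiag.diagonal_diag, diagonal_mem_unitaryGroup_iff] at hU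
    rw [← hdiag.diagonal_diag] at hA
    refine ⟨fun a => U.diag (.inl a), fun c => U.diag (.inr c), fun a => hU _, fun c => hU _, ?_⟩
    ext a c
    rw [toBlocks₁₂, of_apply, hA, diagonal_mul_mul_conjTranspose_apply, SimpleGraph.adjMatrix_apply]
    simp [hG, vecMulVec_apply]
  · rintro ⟨x, y, hx, hy, hB⟩
    refine ⟨diagonal (Sum.elim x y), isDiag_diagonal _,
      diagonal_mem_unitaryGroup_iff.mpr (by rintro (a | c) <;> simp [hx, hy]), ?_⟩
    conv_lhs => rw [A_eq_fromBlocks hG, hB]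
    ext i j
    rw [diagonal_mul_mul_conjTranspose_apply, SimpleGraph.adjMatrix_apply]
    rcases i with a | c <;> rcases j with b | d <;> simp [hG, vecMulVec_apply]

end TGainGraph

open TGainGraph in
/-- For any gain graph on `K_{n,n}`, `E(Φ) ≥ E(K_{n,n}) = 2n`, with equality iff
`Φ ∼ (K_{n,n}, 1)`. -/
theorem energy_completeBipartite_ge {n : ℕ}
    (Φ : TGainGraph (Fin n ⊕ Fin n))
    (hG : Φ.G = completeBipartiteGraph (Fin n) (Fin n)) :
    2 * (n : ℝ) ≤ Φ.energy ∧ (Φ.energy = 2 * (n : ℝ) ↔ Φ.SwitchesToOne) := by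
  rcases n.eq_zero_or_pos with rfl | hn
  · have hE : Φ.energy = 0 := by simp [energy]
    exact ⟨hE.ge.trans' (by simp), fun _ => ⟨1, isDiag_one, one_mem _, Subsingleton.elim _ _⟩,
      fun _ => hE.trans (by simp)⟩
  have : Nonempty (Fin n) := ⟨⟨0, hn⟩⟩
  have hnR : (0 : ℝ) < n := Nat.cast_pos.mpr hn
  set e := Φ.herm.eigenvalues
  have hE : Φ.energy = ∑ i, |e i| := rfl
  have hbound : ∀ i, |e i| ≤ n := by simpa using abs_eigenvalues_le hG
  have hsq : ∑ i, e i ^ 2 = 2 * (n : ℝ) ^ 2 := by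
    rw [sum_eigenvalues_sq hG]; simp; ring
  have hlower := sum_sq_le_mul_sum_abs hbound
  refine ⟨by nlinarith, ?_⟩
  calc Φ.energy = 2 * n ↔ n * ∑ i, |e i| = ∑ i, e i ^ 2 := by
        rw [hE, hsq, show 2 * (n : ℝ) ^ 2 = n * (2 * n) by ring, mul_right_inj' hnR.ne']
    _ ↔ (n : ℝ) ^ 2 * ∑ i, e i ^ 2 = ∑ i, e i ^ 4 := mul_sum_abs_eq_sum_sq_iff hnR.le hbound
    _ ↔ ∑ a, ∑ b, ‖(Φ.A.toBlocks₁₂ * Φ.A.toBlocks₁₂ᴴ) a b‖ ^ 2 = (n * n : ℝ) ^ 2 := by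
        rw [hsq, sum_eigenvalues_pow_four hG]; constructor <;> intro h <;> linarith
    _ ↔ _ := by simpa using sum_sq_norm_mul_conjTranspose_eq_iff (norm_toBlocks₁₂_apply hG)
    _ ↔ Φ.SwitchesToOne := (switchesToOne_iff hG).symm
end
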